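/- arXiv:1512.08226 — 2 statements merged into one kernel-verified Lean document; each statement's English description precedes it below -/
import Mathlib

section
/- Let V be an n-dimensional real inner product space with n > 2, F a skew-symmetric endomorphism and U a unit vector with F²X = -X + ⟨X,U⟩U, FU = 0. Let A, A₁, A₁* be symmetric endomorphisms satisfying [A, A₁*] = 0 and [A₁, A₁*] = 2F. If A_η := c₀•A + c₁•A₁ is a scalar multiple of the identity (A_η = λ·id) with c₁ ≥ 0, then c₁ = 0. -/
open scoped RealInnerProductSpace

theorem stmt10 {V : Type*} [NormedAddCommGroup V] [InnerProductSpace ℝ V]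
    [FiniteDimensional ℝ V] (hn : 2 < Module.finrank ℝ V)
    (F : V →ₗ[ℝ] V) (hskew : ∀ X Y : V, ⟪F X, Y⟫ = -⟪X, F Y⟫)
    (U : V) (hU : ‖U‖ = 1)
    (hF2 : ∀ X : V, F (F X) = -X + ⟪X, U⟫ • U)
    (hFU : F U = 0)
    (A A₁ A₁s : V →ₗ[ℝ] V)
    (hA : A.IsSymmetric) (hA₁ : A₁.IsSymmetric) (hA₁s : A₁s.IsSymmetric)
    (hcomm1 : A ∘ₗ A₁s - A₁s ∘ₗ A = 0)
    (hcomm2 : A₁ ∘ₗ A₁s - A₁s ∘ₗ A₁ = (2 : ℝ) • F)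
    (c₀ c₁ lam : ℝ) (hc₁ : 0 ≤ c₁)
    (humb : c₀ • A + c₁ • A₁ = lam • LinearMap.id) :
    c₁ = 0 := by
  by_contra hne
  -- First show F = 0
  have hFzero : ∀ X : V, F X = 0 := by
    intro X
    have h1 : ∀ Y : V, c₀ • A Y + c₁ • A₁ Y = lam • Y := by
      intro Y
      have := congrArg (fun L : V →ₗ[ℝ] V => L Y) humb
      simpa using this
    have hc1p : A (A₁s X) - A₁s (A X) = 0 := by
      have := congrArg (fun L : V →ₗ[ℝ] V => L X) hcomm1
      simpa using this
    have hc2p : A₁ (A₁s X) - A₁s (A₁ X) = (2 : ℝ) • F X := by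
      have := congrArg (fun L : V →ₗ[ℝ] V => L X) hcomm2
      simpa using this
    -- h1 at A₁s X
    have e1 : c₀ • A (A₁s X) + c₁ • A₁ (A₁s X) = lam • A₁s X := h1 (A₁s X)
    -- apply A₁s to h1 X
    have e2 : c₀ • A₁s (A X) + c₁ • A₁s (A₁ X) = lam • A₁s X := by
      have := congrArg A₁s (h1 X)
      simpa [map_add, map_smul] using this
    have e3 : c₀ • (A (A₁s X) - A₁s (A X)) + c₁ • (A₁ (A₁s X) - A₁s (A₁ X)) = 0 := by
      linear_combination (norm := module) e1 - e2
    rw [hc1p, hc2p, smul_zero, zero_add, smul_smul] at e3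
    exact (smul_eq_zero.mp e3).resolve_left (mul_ne_zero hne two_ne_zero)
  -- Now F = 0 gives every X lies in span {U}
  have hspan : (Submodule.span ℝ {U}) = ⊤ := by
    rw [eq_top_iff]
    intro X _
    have := hF2 X
    rw [hFzero X, hFzero] at this
    have hX : X = ⟪X, U⟫ • U := by
      have : (0 : V) = -X + ⟪X, U⟫ • U := by simpa using this
      linear_combination (norm := module) this
    rw [hX]
    exact Submodule.smul_mem _ _ (Submodule.mem_span_singleton_self U)
  have hU0 : U ≠ 0 := by
    intro h; rw [h, norm_zero] at hU; norm_num at hU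
  have h1 : Module.finrank ℝ V = 1 := by
    rw [← finrank_top ℝ V, ← hspan, finrank_span_singleton hU0]
  omega
end

section
/- Let V be a 3-dimensional real inner product space with orthonormal basis {X, Y, U}, F skew-symmetric with FX = Y, FY = -X, FU = 0. Suppose A₁, A₁* are symmetric endomorphisms with trace A₁ = trace A₁* = 0, A₁U = X, A₁*U = Y, A₁Y = A₁*X, A₁X = -F(A₁*X) + U, and A₁*X = F(A₁X). Then A₁X = U, A₁Y = 0, A₁*X = 0, A₁*Y = U, and consequently [A₁,A₁*]X = -Y ≠ 2Y. -/
open scoped RealInnerProductSpace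

/-!
Write `A₁ X = a X + b Y + U`: the `U`-coordinate is `⟪A₁ U, X⟫ = 1` by symmetry. Then
`A₁* X = F (A₁ X) = a Y - b X`, so symmetry of `A₁` gives `b = ⟪A₁ Y, X⟫ = ⟪A₁* X, X⟫ = -b`,
and `0 = trace A₁ = a + ⟪Y, A₁* X⟫ + ⟪U, X⟫ = 2a`. Hence `A₁ X = U`, `A₁* X = A₁ Y = 0`, and the
same two arguments (symmetry for the `X`- and `U`-coordinates, the trace for the `Y`-coordinate)
give `A₁* Y = U`.
-/

theorem Orthonormal.exists_orthonormalBasis_coe_eq {ι 𝕜 E : Type*} [RCLike 𝕜]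
    [NormedAddCommGroup E] [InnerProductSpace 𝕜 E] [Fintype ι] [Nonempty ι] {v : ι → E}
    (hv : Orthonormal 𝕜 v) (hcard : Fintype.card ι = Module.finrank 𝕜 E) :
    ∃ b : OrthonormalBasis ι 𝕜 E, ⇑b = v := by
  have hb := coe_basisOfOrthonormalOfCardEqFinrank hv hcard
  exact ⟨_, (Module.Basis.coe_toOrthonormalBasis _ (by rw [hb]; exact hv)).trans hb⟩

section OrthonormalTriple

variable {V : Type*} [NormedAddCommGroup V] [InnerProductSpace ℝ V] {X Y U : V}

theorem Orthonormal.inner_fin_three (horth : Orthonormal ℝ ![X, Y, U]) :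
    ⟪X, X⟫ = 1 ∧ ⟪Y, Y⟫ = 1 ∧ ⟪U, U⟫ = 1 ∧ ⟪X, Y⟫ = 0 ∧ ⟪X, U⟫ = 0 ∧ ⟪Y, U⟫ = 0 := by
  have h := orthonormal_iff_ite.mp horth
  exact ⟨by simpa using h 0 0, by simpa using h 1 1, by simpa using h 2 2,
    by simpa using h 0 1, by simpa using h 0 2, by simpa using h 1 2⟩

variable (horth : Orthonormal ℝ ![X, Y, U]) (hdim : Module.finrank ℝ V = 3)
include horth hdim

theorem Orthonormal.inner_smul_add_fin_three (v : V) :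
    ⟪X, v⟫ • X + ⟪Y, v⟫ • Y + ⟪U, v⟫ • U = v := by
  obtain ⟨b, hb⟩ := horth.exists_orthonormalBasis_coe_eq (by simp [hdim])
  simpa [Fin.sum_univ_three, hb] using b.sum_repr' v

theorem Orthonormal.trace_eq_inner_add_fin_three (T : V →ₗ[ℝ] V) :
    LinearMap.trace ℝ V T = ⟪X, T X⟫ + ⟪Y, T Y⟫ + ⟪U, T U⟫ := by
  obtain ⟨b, hb⟩ := horth.exists_orthonormalBasis_coe_eq (by simp [hdim])
  simpa [Fin.sum_univ_three, hb] using T.trace_eq_sum_inner b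

theorem Orthonormal.apply_eq_of_isSymmetric_of_rotation {F A B : V →ₗ[ℝ] V}
    (hFX : F X = Y) (hFY : F Y = -X) (hFU : F U = 0)
    (hA : A.IsSymmetric) (htr : LinearMap.trace ℝ V A = 0)
    (hAU : A U = X) (hAY : A Y = B X) (hBX : B X = F (A X)) :
    A X = U ∧ B X = 0 := by
  obtain ⟨hXX, hYY, -, hXY, hXU, -⟩ := horth.inner_fin_three
  set a := ⟪X, A X⟫
  set b := ⟪Y, A X⟫
  have hAX : A X = a • X + b • Y + U := by
    have hUAX : ⟪U, A X⟫ = 1 := by rw [← hA, hAU, hXX]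
    simpa [hUAX] using (horth.inner_smul_add_fin_three hdim (A X)).symm
  have hBX' : B X = a • Y - b • X := by
    rw [hBX, hAX]
    simp only [map_add, map_smul, hFX, hFY, hFU, smul_neg, add_zero]
    abel
  have hYX : ⟪Y, X⟫ = 0 := by rw [real_inner_comm, hXY]
  have hUX : ⟪U, X⟫ = 0 := by rw [real_inner_comm, hXU]
  have hb : b = 0 := by
    have hsymm : b = ⟪B X, X⟫ := by rw [← hAY]; exact (hA Y X).symm
    simp only [hBX', inner_sub_left, real_inner_smul_left, hXX, hYX] at hsymm
    linarith
  have ha : a = 0 := by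
    have htrace := horth.trace_eq_inner_add_fin_three hdim A
    simp only [htr, hAU, hAY, hBX', inner_sub_right, real_inner_smul_right, hYY, hYX,
      hUX] at htrace
    linarith
  constructor
  · simp [hAX, ha, hb]
  · simp [hBX', ha, hb]

theorem Orthonormal.apply_Y_eq_U_of_isSymmetric {B : V →ₗ[ℝ] V} (hB : B.IsSymmetric)
    (htr : LinearMap.trace ℝ V B = 0) (hBX : B X = 0) (hBU : B U = Y) : B Y = U := by
  obtain ⟨-, hYY, -, -, -, hYU⟩ := horth.inner_fin_three
  have hX : ⟪X, B Y⟫ = 0 := by rw [← hB, hBX, inner_zero_left]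
  have hU : ⟪U, B Y⟫ = 1 := by rw [← hB, hBU, hYY]
  have hY : ⟪Y, B Y⟫ = 0 := by
    have htrace := horth.trace_eq_inner_add_fin_three hdim B
    rw [htr, hBX, hBU, inner_zero_right, real_inner_comm Y U, hYU] at htrace
    linarith
  simpa [hX, hY, hU] using (horth.inner_smul_add_fin_three hdim (B Y)).symm

end OrthonormalTriple

theorem stmt14_general {V : Type*} [NormedAddCommGroup V] [InnerProductSpace ℝ V]
    (hdim : Module.finrank ℝ V = 3)
    (X Y U : V) (horth : Orthonormal ℝ ![X, Y, U])
    (F : V →ₗ[ℝ] V)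
    (hFX : F X = Y) (hFY : F Y = -X) (hFU : F U = 0)
    (A₁ A₁s : V →ₗ[ℝ] V) (hA₁ : A₁.IsSymmetric) (hA₁s : A₁s.IsSymmetric)
    (htr1 : LinearMap.trace ℝ V A₁ = 0) (htr2 : LinearMap.trace ℝ V A₁s = 0)
    (h1 : A₁ U = X) (h2 : A₁s U = Y)
    (h3 : A₁ Y = A₁s X)
    (h5 : A₁s X = F (A₁ X)) :
    A₁ X = U ∧ A₁ Y = 0 ∧ A₁s X = 0 ∧ A₁s Y = U ∧
      A₁ (A₁s X) - A₁s (A₁ X) = -Y ∧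
      A₁ (A₁s X) - A₁s (A₁ X) ≠ (2 : ℝ) • Y := by
  obtain ⟨hA₁X, hA₁sX⟩ :=
    horth.apply_eq_of_isSymmetric_of_rotation hdim hFX hFY hFU hA₁ htr1 h1 h3 h5
  have hcomm : A₁ (A₁s X) - A₁s (A₁ X) = -Y := by simp [hA₁X, hA₁sX, h2]
  refine ⟨hA₁X, h3.trans hA₁sX, hA₁sX,
    horth.apply_Y_eq_U_of_isSymmetric hdim hA₁s htr2 hA₁sX h2, hcomm, ?_⟩
  rw [hcomm]
  intro h
  have h3Y : (3 : ℝ) • Y = 0 := by linear_combination (norm := module) -h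
  exact horth.ne_zero 1 ((smul_eq_zero.mp h3Y).resolve_left three_ne_zero)

theorem stmt14 {V : Type*} [NormedAddCommGroup V] [InnerProductSpace ℝ V]
    [FiniteDimensional ℝ V] (hdim : Module.finrank ℝ V = 3)
    (X Y U : V) (horth : Orthonormal ℝ ![X, Y, U])
    (F : V →ₗ[ℝ] V) (hskew : ∀ W Z : V, ⟪F W, Z⟫ = -⟪W, F Z⟫)
    (hFX : F X = Y) (hFY : F Y = -X) (hFU : F U = 0)
    (A₁ A₁s : V →ₗ[ℝ] V) (hA₁ : A₁.IsSymmetric) (hA₁s : A₁s.IsSymmetric)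
    (htr1 : LinearMap.trace ℝ V A₁ = 0) (htr2 : LinearMap.trace ℝ V A₁s = 0)
    (h1 : A₁ U = X) (h2 : A₁s U = Y)
    (h3 : A₁ Y = A₁s X)
    (h4 : A₁ X = -F (A₁s X) + U)
    (h5 : A₁s X = F (A₁ X)) :
    A₁ X = U ∧ A₁ Y = 0 ∧ A₁s X = 0 ∧ A₁s Y = U ∧
      A₁ (A₁s X) - A₁s (A₁ X) = -Y ∧
      A₁ (A₁s X) - A₁s (A₁ X) ≠ (2 : ℝ) • Y :=
  stmt14_general hdim X Y U horth F hFX hFY hFU A₁ A₁s hA₁ hA₁s htr1 htr2 h1 h2 h3 h5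
end
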